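/- Fix l ≥ 1, positive reals α_1,…,α_l with ∑ α_i = 1, and 0 < q < 1. Every complex root r of the polynomial r^l − q·∑_{i=1}^l α_i r^{l−i} satisfies |r| < 1. -/

import Mathlib

open Finset

theorem characteristic_roots_inside_unit_disc (l : ℕ) (hl : 1 ≤ l)
    (α : Fin l → ℝ) (hα : ∀ i, 0 < α i) (hsum : ∑ i, α i = 1)
    (q : ℝ) (hq0 : 0 < q) (hq1 : q < 1) (r : ℂ)
    (hroot : r ^ l = (q : ℂ) * ∑ i : Fin l, (α i : ℂ) * r ^ (l - 1 - (i : ℕ))) :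
    ‖r‖ < 1 := by
  by_contra h
  push_neg at h
  set a := ‖r‖ with ha
  have ha1 : 1 ≤ a := h
  have key : a ^ l ≤ q * ∑ i : Fin l, α i * a ^ (l - 1 - (i : ℕ)) := by
    calc a ^ l = ‖r ^ l‖ := (norm_pow _ _).symm
    _ = ‖(q : ℂ) * ∑ i : Fin l, (α i : ℂ) * r ^ (l - 1 - (i : ℕ))‖ := by
        rw [hroot]
    _ ≤ q * ∑ i : Fin l, α i * a ^ (l - 1 - (i : ℕ)) := by
        rw [norm_mul, Complex.norm_real, Real.norm_eq_abs, abs_of_pos hq0]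
        refine mul_le_mul_of_nonneg_left ?_ hq0.le
        refine (norm_sum_le _ _).trans_eq ?_
        refine Finset.sum_congr rfl fun i _ => ?_
        rw [norm_mul, norm_pow, Complex.norm_real, Real.norm_eq_abs, abs_of_pos (hα i)]
  have h2 : ∑ i : Fin l, α i * a ^ (l - 1 - (i : ℕ)) ≤ a ^ (l - 1) := by
    calc ∑ i : Fin l, α i * a ^ (l - 1 - (i : ℕ))
        ≤ ∑ i : Fin l, α i * a ^ (l - 1) := by
          refine Finset.sum_le_sum fun i _ => ?_
          exact mul_le_mul_of_nonneg_left
            (pow_le_pow_right₀ ha1 (Nat.sub_le _ _)) (hα i).le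
    _ = a ^ (l - 1) := by rw [← Finset.sum_mul, hsum, one_mul]
  have h3 : a ^ (l - 1) ≤ a ^ l := pow_le_pow_right₀ ha1 (Nat.sub_le _ _)
  have h4 : q * a ^ l < a ^ l := by
    have : (0:ℝ) < a ^ l := pow_pos (lt_of_lt_of_le one_pos ha1) l
    nlinarith
  have : a ^ l < a ^ l :=
    key.trans_lt (lt_of_le_of_lt
      (mul_le_mul_of_nonneg_left (h2.trans h3) hq0.le) h4)
  exact lt_irrefl _ this
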